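/- arXiv:1603.00193 — 5 statements merged into one kernel-verified Lean document; each statement's English description precedes it below -/
import Mathlib

section
/- Let R be a commutative ring, σ and τ finite types, and n ≥ 0. In MvPolynomial (σ ⊕ τ) R one has e_n = ∑_{i=0}^{n} (rename Sum.inl (e_i)) · (rename Sum.inr (e_{n-i})), where e_n on the left is the n-th elementary symmetric polynomial in all the variables indexed by σ ⊕ τ, and on the right e_i and e_{n-i} are the elementary symmetric polynomials in the variables indexed by σ and by τ respectively, included via renaming along Sum.inl and Sum.inr. (This is the addition formula e_n[X+Y] = ∑_{i=0}^n e_i[X] e_{n-i}[Y].) -/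
open MvPolynomial

lemma Multiset.esymm_cons' {R : Type*} [CommRing R] (a : R) (s : Multiset R) (n : ℕ) :
    (a ::ₘ s).esymm (n + 1) = s.esymm (n + 1) + a * s.esymm n := by
  rw [Multiset.esymm, Multiset.powersetCard_cons, Multiset.map_add, Multiset.sum_add,
    Multiset.map_map]
  rw [Multiset.esymm, Multiset.esymm, ← Multiset.sum_map_mul_left]
  congr 1
  refine congrArg Multiset.sum (Multiset.map_congr rfl fun x _ => ?_)
  simp

lemma Multiset.esymm_add' {R : Type*} [CommRing R] (s t : Multiset R) (n : ℕ) :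
    (s + t).esymm n = ∑ i ∈ Finset.range (n + 1), s.esymm i * t.esymm (n - i) := by
  induction s using Multiset.induction_on generalizing n with
  | empty =>
    rw [zero_add, Finset.sum_eq_single 0]
    · simp [Multiset.esymm]
    · intro i _ hi
      cases i with
      | zero => exact absurd rfl hi
      | succ j =>
        have : (0 : Multiset R).esymm (j + 1) = 0 := by
          simp [Multiset.esymm, Multiset.powersetCard_zero_right]
        rw [this]; ring
    · simp
  | cons a s ih =>
    cases n with
    | zero => simp [Multiset.esymm]
    | succ m =>
      rw [Multiset.cons_add, Multiset.esymm_cons', ih, ih]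
      rw [Finset.sum_range_succ' _ (m + 1), Finset.sum_range_succ' (fun i => (a ::ₘ s).esymm i * t.esymm (m + 1 - i)) (m + 1)]
      simp only [Nat.sub_zero]
      have h0 : (a ::ₘ s).esymm 0 = s.esymm 0 := by simp [Multiset.esymm]
      rw [h0]
      have : ∀ i ∈ Finset.range (m + 1),
          (a ::ₘ s).esymm (i + 1) * t.esymm (m + 1 - (i + 1)) =
          s.esymm (i + 1) * t.esymm (m + 1 - (i + 1)) + a * (s.esymm i * t.esymm (m - i)) := by
        intro i _
        rw [Multiset.esymm_cons']
        have : m + 1 - (i + 1) = m - i := by omega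
        rw [this]; ring
      rw [Finset.sum_congr rfl this, Finset.sum_add_distrib, ← Finset.mul_sum]
      ring

lemma rename_esymm_eq_multiset_esymm {R : Type*} [CommRing R] {σ τ : Type*} [Fintype σ]
    (f : σ → τ) (n : ℕ) :
    rename f (esymm σ R n) = (Finset.univ.val.map (fun i => (X (f i) : MvPolynomial τ R))).esymm n := by
  simp_rw [esymm, map_sum, map_prod, rename_X, Finset.esymm_map_val]

/-- The addition formula `e_n[X+Y] = ∑_{i=0}^n e_i[X] e_{n-i}[Y]`: the elementary symmetric
polynomial in the variables `σ ⊕ τ` decomposes as a convolution of the elementary symmetric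
polynomials in the `σ`-variables and in the `τ`-variables. -/
theorem esymm_sum_add (R : Type*) [CommRing R] (σ τ : Type*) [Fintype σ] [Fintype τ]
    (n : ℕ) :
    esymm (σ ⊕ τ) R n =
      ∑ i ∈ Finset.range (n + 1),
        rename Sum.inl (esymm σ R i) * rename Sum.inr (esymm τ R (n - i)) := by
  have huniv : (Finset.univ : Finset (σ ⊕ τ)) = Finset.univ.disjSum Finset.univ :=
    (Finset.univ_disjSum_univ).symm
  rw [esymm_eq_multiset_esymm, huniv]
  have hval : (Finset.univ.disjSum (Finset.univ : Finset τ)).val.map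
        (X : σ ⊕ τ → MvPolynomial (σ ⊕ τ) R) =
      (Finset.univ : Finset σ).val.map (fun i => X (Sum.inl i)) +
      (Finset.univ : Finset τ).val.map (fun i => X (Sum.inr i)) := by
    simp [Finset.disjSum, Multiset.disjSum, Multiset.map_add, Multiset.map_map, Function.comp]
  rw [hval, Multiset.esymm_add']
  refine Finset.sum_congr rfl fun i _ => ?_
  rw [rename_esymm_eq_multiset_esymm, rename_esymm_eq_multiset_esymm]
end

section
/- Let R be a commutative ring, σ and τ finite types, and n ≥ 0. Let φ : MvPolynomial (σ × τ) R → MvPolynomial (σ ⊕ τ) R be the R-algebra homomorphism sending the variable indexed by (i, j) to X_{inl i} · X_{inr j}. Then φ applied to the complete homogeneous symmetric polynomial h_n in the variables indexed by σ × τ equals ∑_{λ ⊢ n} (rename Sum.inl (h_λ)) · (rename Sum.inr (m_λ)), the sum over all partitions λ of n, where h_λ = ∏_k h_{λ_k} is a product of complete homogeneous symmetric polynomials in the σ-variables and m_λ is the monomial symmetric polynomial in the τ-variables. (This is the identity h_n[XY] = ∑_{λ⊢n} h_λ[X] m_λ[Y].) -/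
/-!
Write `h_n` over `σ × τ` as the sum of the monomials of the multisets `s` of `n` pairs; the
substitution sends that monomial to `x^{s₁} y^{s₂}`, where `s₁`, `s₂` are the multisets of first
and second coordinates. Group the `s` by `t = s₂`: splitting `s` along the second coordinate
identifies this fibre with `∏ⱼ Sym σ (mult_j t)`, so the `x`-parts sum to `∏ⱼ h_{mult_j t} = h_λ`
with `λ` the shape of `t`. Grouping the `t` by their shape turns the sum of the `y^t` into `m_λ`.
-/

open MvPolynomial

namespace Multiset

variable {α β : Type*} [DecidableEq β]

theorem count_map_prodMk_right [DecidableEq α] (m : Multiset α) (i : α) (j k : β) :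
    count (i, j) (m.map (·, k)) = if k = j then count i m else 0 := by
  split_ifs with h
  · subst h
    exact count_map_eq_count' _ _ (fun _ _ h => (Prod.ext_iff.1 h).1) i
  · refine count_eq_zero.2 fun hm => h ?_
    obtain ⟨_, _, he⟩ := mem_map.1 hm
    exact (Prod.ext_iff.1 he).2

theorem count_map_fst_filter_snd [DecidableEq α] (s : Multiset (α × β)) (i : α) (j : β) :
    count i ((s.filter (fun p => j = p.2)).map Prod.fst) = count (i, j) s := by
  rw [count_map, filter_filter, count_eq_card_filter_eq]
  congr 1
  exact filter_congr fun p _ => by rw [Prod.ext_iff, and_comm]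

def prodEquivPi [Fintype β] : Multiset (α × β) ≃ (β → Multiset α) where
  toFun s j := (s.filter (fun p => j = p.2)).map Prod.fst
  invFun f := ∑ j, (f j).map (·, j)
  left_inv s := by
    classical
    ext ⟨i, j⟩
    simp only [count_sum', count_map_prodMk_right, count_map_fst_filter_snd,
      Finset.sum_ite_eq', Finset.mem_univ, if_true]
  right_inv f := by
    classical
    funext j
    ext i
    simp only [count_map_fst_filter_snd, count_sum', count_map_prodMk_right,
      Finset.sum_ite_eq', Finset.mem_univ, if_true]

variable [Fintype β]

theorem card_prodEquivPi_apply (s : Multiset (α × β)) (j : β) :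
    card (prodEquivPi s j) = count j (s.map Prod.snd) :=
  (card_map _ _).trans (count_map _ _ _).symm

theorem map_fst_eq_sum_prodEquivPi (s : Multiset (α × β)) :
    s.map Prod.fst = ∑ j, prodEquivPi s j := by
  conv_lhs => rw [← prodEquivPi.symm_apply_apply s]
  change (∑ j, (prodEquivPi s j).map (·, j)).map Prod.fst = _
  rw [← mapAddMonoidHom_apply, map_sum]
  simp only [mapAddMonoidHom_apply, map_map, Function.comp_def, map_id']

end Multiset

namespace Sym

variable {α β : Type*} [DecidableEq β] [Fintype β] {n : ℕ}

def prodFiberEquiv (t : Sym β n) :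
    {s : Sym (α × β) n // s.map Prod.snd = t} ≃ ∀ j, Sym α (t.1.count j) where
  toFun s j := ⟨Multiset.prodEquivPi s.1.1 j, by
    rw [Multiset.card_prodEquivPi_apply]
    exact congrArg (fun u : Sym β n => Multiset.count j (u : Multiset β)) s.2⟩
  invFun f :=
    have hsnd : (Multiset.prodEquivPi.symm fun j => (f j).1).map Prod.snd = t.1 :=
      Multiset.ext' fun j => by
        rw [← Multiset.card_prodEquivPi_apply, Equiv.apply_symm_apply, (f j).2]
    ⟨⟨_, by rw [← Multiset.card_map, hsnd, t.2]⟩, Sym.ext hsnd⟩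
  left_inv s := Subtype.ext <| Sym.ext <| Multiset.prodEquivPi.symm_apply_apply s.1.1
  right_inv f := funext fun j => Sym.ext <| congrFun (Multiset.prodEquivPi.apply_symm_apply _) j

end Sym

namespace MvPolynomial

variable {σ τ R : Type*} [CommSemiring R]

theorem aeval_X_inl_mul_X_inr_multiset_prod (m : Multiset (σ × τ)) :
    aeval (fun p : σ × τ => (X (Sum.inl p.1) * X (Sum.inr p.2) : MvPolynomial (σ ⊕ τ) R))
        ((m.map X).prod : MvPolynomial (σ × τ) R) =
      rename Sum.inl ((m.map Prod.fst).map X).prod *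
        rename Sum.inr ((m.map Prod.snd).map X).prod := by
  simp [map_multiset_prod, Multiset.map_map, Multiset.prod_map_mul]

variable [Fintype σ] [DecidableEq σ] [Fintype τ] [DecidableEq τ] {n : ℕ}

variable (σ R) in
theorem hsymmPart_ofSym (t : Sym τ n) :
    hsymmPart σ R (.ofSym t) = ∏ j, hsymm σ R (t.1.count j) := by
  rw [hsymmPart, Nat.Partition.ofSym, Multiset.map_map, ← Multiset.toFinset_val,
    ← Finset.prod_eq_multiset_prod]
  exact Finset.prod_subset (Finset.subset_univ _) fun j _ hj => by
    rw [Function.comp_apply, Multiset.count_eq_zero_of_notMem (by simpa using hj), hsymm_zero]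

variable (R) in
theorem sum_fiber_prod_X_map_fst_eq_hsymmPart (t : Sym τ n) :
    ∑ s : {s : Sym (σ × τ) n // s.map Prod.snd = t}, ((s.1.1.map Prod.fst).map X).prod =
      hsymmPart σ R (.ofSym t) := by
  simp only [hsymmPart_ofSym, hsymm, Fintype.prod_sum]
  refine Fintype.sum_equiv (Sym.prodFiberEquiv t) _ _ fun s => ?_
  rw [Multiset.map_fst_eq_sum_prodEquivPi, ← Multiset.mapAddMonoidHom_apply, map_sum,
    Multiset.prod_sum]
  rfl

theorem sum_mul_msymm {A F : Type*} [Semiring A] [FunLike F (MvPolynomial τ R) A]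
    [AddMonoidHomClass F (MvPolynomial τ R) A] (ψ : F) (c : n.Partition → A) :
    ∑ μ, c μ * ψ (msymm τ R μ) = ∑ t : Sym τ n, c (.ofSym t) * ψ ((t.1.map X).prod) := by
  rw [← Fintype.sum_fiberwise fun t : Sym τ n => Nat.Partition.ofSym t]
  refine Finset.sum_congr rfl fun μ _ => ?_
  rw [msymm, map_sum, Finset.mul_sum]
  exact Finset.sum_congr rfl fun t _ => by rw [t.2]

end MvPolynomial

/-- The multiplication formula `h_n[XY] = ∑_{λ⊢n} h_λ[X] m_λ[Y]`: applying the `R`-algebra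
homomorphism sending the variable `(i, j)` to `X (inl i) * X (inr j)` to the complete
homogeneous symmetric polynomial `h_n` in the variables `σ × τ` yields the sum over
partitions `λ` of `n` of `h_λ` in the `σ`-variables times the monomial symmetric polynomial
`m_λ` in the `τ`-variables. -/
theorem hsymm_prod_vars (R : Type*) [CommRing R] (σ τ : Type*) [Fintype σ] [Fintype τ]
    [DecidableEq σ] [DecidableEq τ] (n : ℕ) :
    (aeval fun p : σ × τ => (X (Sum.inl p.1) * X (Sum.inr p.2) : MvPolynomial (σ ⊕ τ) R))
        (hsymm (σ × τ) R n) =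
      ∑ μ : n.Partition,
        rename Sum.inl (hsymmPart σ R μ) * rename Sum.inr (msymm τ R μ) := by
  rw [hsymm, map_sum, ← Fintype.sum_fiberwise (fun s : Sym (σ × τ) n => s.map Prod.snd),
    sum_mul_msymm]
  refine Finset.sum_congr rfl fun t _ => ?_
  have hsnd (s : {s : Sym (σ × τ) n // s.map Prod.snd = t}) : s.1.1.map Prod.snd = t.1 :=
    congrArg Subtype.val s.2
  simp only [aeval_X_inl_mul_X_inr_multiset_prod, hsnd, ← Finset.sum_mul, ← map_sum, sum_fiber_prod_X_map_fst_eq_hsymmPart]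
end

section
/- Let R be a commutative ring, σ and τ finite types, and n ≥ 0. Then in MvPolynomial (σ ⊕ τ) R one has ∑_{λ ⊢ n} (rename Sum.inl (h_λ)) · (rename Sum.inr (m_λ)) = ∑_{λ ⊢ n} (rename Sum.inl (m_λ)) · (rename Sum.inr (h_λ)), the sums running over all partitions λ of n, where h_λ = ∏_k h_{λ_k} and m_λ denotes the monomial symmetric polynomial, in the σ-variables and τ-variables respectively as indicated. (This expresses the symmetry in X and Y of the reproducing kernel pExp[XY], i.e. that {h_λ} and {m_λ} are dual bases for the Hall pairing.) -/
/-!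
Both sides are the degree-`n` part of the Cauchy kernel `∏_{i,j} 1 / (1 - xᵢ yⱼ)`, which is
visibly symmetric. Indeed, grouping the monomials `yˢ` of `m_λ[Y]` by their exponent vector,
`∑_λ h_λ[X] m_λ[Y] = ∑_{s ∈ Sym τ n} ∏_j h_{sⱼ}[X] yⱼ^{sⱼ} = ∑_s ∏_j h_{sⱼ}[X yⱼ]`, and
since `∑_m h_m[X] t^m = ∏_i 1 / (1 - xᵢ t)` this is the coefficient of `tⁿ` in
`∏_j ∏_i 1 / (1 - xᵢ yⱼ t)`.
-/

open MvPolynomial Finset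

theorem Multiset.prod_map_eq_prod_pow_count {M ι : Type*} [CommMonoid M] [Fintype ι]
    [DecidableEq ι] (m : Multiset ι) (x : ι → M) :
    (m.map x).prod = ∏ i, x i ^ m.count i := by
  rw [Finset.prod_multiset_map_count]
  exact prod_subset (subset_univ _) fun i _ hi ↦ by
    rw [Multiset.count_eq_zero.mpr (by simpa using hi), pow_zero]

namespace PowerSeries

variable {R : Type*} [CommSemiring R] {ι : Type*} [Fintype ι] [DecidableEq ι]

theorem coeff_prod_eq_sum_sym (f : ι → R⟦X⟧) (n : ℕ) :
    coeff n (∏ i, f i) = ∑ s : Sym ι n, ∏ i, coeff ((s : Multiset ι).count i) (f i) := by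
  have hmem (l : ι →₀ ℕ) : l ∈ finsuppAntidiag univ n ↔ l.sum (fun _ ↦ id) = n := by
    simp [Finsupp.sum_fintype]
  rw [coeff_prod, ← Finset.sum_coe_sort]
  refine Fintype.sum_equiv ((Equiv.subtypeEquivRight hmem).trans (Sym.equivNatSum ι n).symm)
    _ _ fun l ↦ ?_
  simp

theorem coeff_prod_mk_pow (x : ι → R) (n : ℕ) :
    coeff n (∏ i, mk (x i ^ ·)) = ∑ s : Sym ι n, ((s : Multiset ι).map x).prod := by
  simp only [coeff_prod_eq_sum_sym, coeff_mk, Multiset.prod_map_eq_prod_pow_count]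

end PowerSeries

theorem Nat.Partition.prod_map_ofSym_parts {M κ : Type*} [CommMonoid M] [Fintype κ]
    [DecidableEq κ] {n : ℕ} (s : Sym κ n) (F : ℕ → M) (hF : F 0 = 1) :
    ((ofSym s).parts.map F).prod = ∏ j, F ((s : Multiset κ).count j) := by
  change ((s.1.dedup.map s.1.count).map F).prod = _
  rw [Multiset.map_map, ← Multiset.toFinset_val, ← Finset.prod_eq_multiset_prod]
  exact prod_subset (subset_univ _) fun j _ hj ↦ by
    rw [Function.comp_apply, Multiset.count_eq_zero.mpr (by simpa using hj), hF]

namespace MvPolynomial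

variable {R S σ τ : Type*} [CommSemiring R] [CommSemiring S] [Algebra R S]
  [Fintype σ] [DecidableEq σ] [Fintype τ] [DecidableEq τ]

theorem aeval_hsymm (x : σ → S) (m : ℕ) :
    aeval x (hsymm σ R m) = ∑ s : Sym σ m, ((s : Multiset σ).map x).prod := by
  simp [hsymm, map_multiset_prod, Multiset.map_map]

theorem aeval_hsymm_mul_const (x : σ → S) (c : S) (m : ℕ) :
    aeval (fun i ↦ x i * c) (hsymm σ R m) = aeval x (hsymm σ R m) * c ^ m := by
  simp only [aeval_hsymm, sum_mul, Multiset.prod_map_mul, Multiset.map_const',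
    Multiset.prod_replicate, Sym.card_coe]

theorem aeval_hsymm_eq_coeff (x : σ → S) (m : ℕ) :
    aeval x (hsymm σ R m) = PowerSeries.coeff m (∏ i, PowerSeries.mk (x i ^ ·)) := by
  rw [aeval_hsymm, PowerSeries.coeff_prod_mk_pow]

theorem aeval_hsymmPart_ofSym (x : σ → S) {n : ℕ} (s : Sym τ n) :
    aeval x (hsymmPart σ R (.ofSym s)) = ∏ j, aeval x (hsymm σ R ((s : Multiset τ).count j)) := by
  rw [hsymmPart, map_multiset_prod, Multiset.map_map]
  exact Nat.Partition.prod_map_ofSym_parts s _ (by simp)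

theorem aeval_msymm (y : τ → S) {n : ℕ} (μ : n.Partition) :
    aeval y (msymm τ R μ) =
      ∑ s : {a : Sym τ n // .ofSym a = μ}, ((s.1 : Multiset τ).map y).prod := by
  simp [msymm, map_multiset_prod, Multiset.map_map]

theorem sum_aeval_hsymmPart_mul_aeval_msymm (x : σ → S) (y : τ → S) (n : ℕ) :
    ∑ μ : n.Partition, aeval x (hsymmPart σ R μ) * aeval y (msymm τ R μ) =
      PowerSeries.coeff n (∏ j, ∏ i, PowerSeries.mk ((x i * y j) ^ ·)) := by
  calc _ = ∑ s : Sym τ n, aeval x (hsymmPart σ R (.ofSym s)) * ((s : Multiset τ).map y).prod := by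
        rw [← Fintype.sum_fiberwise fun s : Sym τ n ↦ Nat.Partition.ofSym s]
        refine sum_congr rfl fun μ _ ↦ ?_
        rw [aeval_msymm, mul_sum]
        exact sum_congr rfl fun s _ ↦ by rw [s.2]
    _ = ∑ s : Sym τ n, ∏ j, aeval (fun i ↦ x i * y j) (hsymm σ R ((s : Multiset τ).count j)) := by
        simp only [aeval_hsymmPart_ofSym, Multiset.prod_map_eq_prod_pow_count, ← prod_mul_distrib,
          aeval_hsymm_mul_const]
    _ = _ := by
        rw [PowerSeries.coeff_prod_eq_sum_sym]
        simp only [aeval_hsymm_eq_coeff]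

end MvPolynomial

/-- Symmetry of the reproducing kernel `pExp[XY]` for the Hall pairing, i.e. `{h_λ}` and
`{m_λ}` are dual bases: `∑_{λ⊢n} h_λ[X] m_λ[Y] = ∑_{λ⊢n} m_λ[X] h_λ[Y]`. -/
theorem hsymm_msymm_kernel_symm (R : Type*) [CommRing R] (σ τ : Type*) [Fintype σ] [Fintype τ]
    [DecidableEq σ] [DecidableEq τ] (n : ℕ) :
    ∑ μ : n.Partition,
        (rename Sum.inl (hsymmPart σ R μ) * rename Sum.inr (msymm τ R μ) :
          MvPolynomial (σ ⊕ τ) R) =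
      ∑ μ : n.Partition,
        rename Sum.inl (msymm σ R μ) * rename Sum.inr (hsymmPart τ R μ) := by
  simp only [rename_eq_aeval, mul_comm (aeval (X ∘ Sum.inl) (msymm σ R _)),
    sum_aeval_hsymmPart_mul_aeval_msymm]
  rw [prod_comm]
  simp only [Function.comp_apply, mul_comm]
end

section
/- Let R be a commutative ring and σ a finite type. In the formal power series ring PowerSeries (MvPolynomial σ R) one has (∏_{i ∈ σ} (1 - X_i · t)) · (∑_{n=0}^{∞} h_n · t^n) = 1, where t is the power series variable, X_i is the variable of MvPolynomial σ R indexed by i (viewed as a constant coefficient), and h_n is the complete homogeneous symmetric polynomial of degree n. (This is pExp[∑ x_i] = ∏_i 1/(1 - x_i) for an alphabet of monomial elements.) -/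
/-!
Each factor `1 - X_i t` is inverted by the geometric series `∑ X_i^n t^n`, and the coefficient of
`t^n` in the product of these series is the sum of all monomials `∏ X_i^(l i)` with `∑ l i = n`,
which is `h_n`.
-/

open MvPolynomial

theorem PowerSeries.one_sub_C_mul_X_mul_mk_pow {A : Type*} [CommRing A] (r : A) :
    (1 - PowerSeries.C r * PowerSeries.X) * PowerSeries.mk (r ^ ·) = 1 := by
  rw [mul_comm]
  simpa [PowerSeries.rescale_mk, PowerSeries.rescale_X] using
    congrArg (PowerSeries.rescale r) (PowerSeries.mk_one_mul_one_sub_eq_one A)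

theorem MvPolynomial.hsymm_eq_sum_finsuppAntidiag (R : Type*) [CommSemiring R] (σ : Type*)
    [Fintype σ] [DecidableEq σ] (n : ℕ) :
    hsymm σ R n = ∑ l ∈ Finset.univ.finsuppAntidiag n, ∏ i, X i ^ l i := by
  have mem_iff (l : σ →₀ ℕ) :
      l ∈ Finset.univ.finsuppAntidiag n ↔ Multiset.card (Finsupp.toMultiset l) = n := by
    simp [Finset.mem_finsuppAntidiag, Finsupp.card_toMultiset, Finsupp.sum_fintype]
  refine Finset.sum_bij' (fun s _ => Multiset.toFinsupp s.1)
    (fun l hl => ⟨Finsupp.toMultiset l, (mem_iff l).1 hl⟩)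
    (fun s _ => by simp [mem_iff]) (fun _ _ => Finset.mem_univ _)
    (fun s _ => Subtype.ext (by simp)) (fun l _ => by simp) fun s _ => ?_
  rw [Finset.prod_multiset_map_count]
  refine Finset.prod_subset (Finset.subset_univ _) fun i _ hi => ?_
  rw [Multiset.count_eq_zero_of_notMem (Multiset.mem_toFinset.not.1 hi), pow_zero]

theorem MvPolynomial.mk_hsymm_eq_prod_mk_pow (R : Type*) [CommSemiring R] (σ : Type*)
    [Fintype σ] [DecidableEq σ] :
    PowerSeries.mk (hsymm σ R) = ∏ i : σ, PowerSeries.mk ((X i : MvPolynomial σ R) ^ ·) := by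
  ext n
  simp [PowerSeries.coeff_prod, hsymm_eq_sum_finsuppAntidiag]

/-- The identity `pExp[∑ x_i] = ∏_i 1/(1 - x_i)` for an alphabet of monomial elements: in
`PowerSeries (MvPolynomial σ R)`, the product `∏_{i ∈ σ} (1 - X_i t)` times the generating
series `∑_n h_n t^n` of the complete homogeneous symmetric polynomials equals `1`. -/
theorem prod_one_sub_X_mul_hsymm_series (R : Type*) [CommRing R] (σ : Type*) [Fintype σ]
    [DecidableEq σ] :
    (∏ i : σ, (1 - PowerSeries.C (R := MvPolynomial σ R) (X i) * PowerSeries.X)) *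
        PowerSeries.mk (fun n => hsymm σ R n) = 1 := by
  rw [mk_hsymm_eq_prod_mk_pow, ← Finset.prod_mul_distrib]
  exact Finset.prod_eq_one fun i _ => PowerSeries.one_sub_C_mul_X_mul_mk_pow (X i)
end

section
/- Let R be a commutative ring, σ a finite type, and n ≥ 1. Then in MvPolynomial σ R one has n · h_n = ∑_{i=1}^{n} p_i · h_{n-i}, where h_m is the complete homogeneous symmetric polynomial of degree m and p_i = ∑_{j ∈ σ} X_j^i is the i-th power sum. (This Newton-type identity is equivalent to the two expressions for the plethystic exponential: ∑_{n≥0} h_n t^n = exp(∑_{n≥1} p_n t^n / n).) -/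
open MvPolynomial

section
variable {R : Type*} [CommRing R] {σ : Type*} [Fintype σ] [DecidableEq σ]

lemma toFinsupp_cons' (a : σ) (m : Multiset σ) :
    Multiset.toFinsupp (a ::ₘ m) = Finsupp.single a 1 + Multiset.toFinsupp m := by
  ext x
  by_cases h : x = a
  · subst h
    simp [Multiset.count_cons, add_comm]
  · simp [Multiset.count_cons, h, Finsupp.single_apply, Ne.symm h]

lemma multiset_prod_X_eq_monomial (m : Multiset σ) :
    (m.map (X : σ → MvPolynomial σ R)).prod = monomial (Multiset.toFinsupp m) 1 := by
  induction m using Multiset.induction with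
  | empty => simp [monomial_zero']
  | cons a m ih =>
      rw [Multiset.map_cons, Multiset.prod_cons, ih, toFinsupp_cons',
        X, monomial_mul, one_mul]

lemma coeff_hsymm' (n : ℕ) (μ : σ →₀ ℕ) :
    coeff μ (hsymm σ R n) = if (∑ x, μ x) = n then 1 else 0 := by
  have hcard : ∀ ν : σ →₀ ℕ, ν.toMultiset.card = ∑ x, ν x := by
    intro ν
    rw [Finsupp.card_toMultiset, Finsupp.sum_fintype] <;> simp
  rw [hsymm]
  simp_rw [multiset_prod_X_eq_monomial]
  rw [MvPolynomial.coeff_sum]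
  simp_rw [coeff_monomial]
  split_ifs with h
  · set s₀ : Sym σ n := ⟨μ.toMultiset, by rw [hcard]; exact h⟩ with hs₀
    have key : ∀ s : Sym σ n, (Multiset.toFinsupp s.1 = μ) ↔ s = s₀ := by
      intro s
      constructor
      · intro hs
        apply Subtype.ext
        rw [hs₀]
        simp only
        rw [← hs, Multiset.toFinsupp_toMultiset]
      · rintro rfl
        rw [hs₀]
        simp [Finsupp.toMultiset_toFinsupp]
    simp_rw [key]
    simp
  · apply Finset.sum_eq_zero
    intro s _
    rw [if_neg]
    intro hs
    apply h
    have h2 : (Multiset.toFinsupp s.1).toMultiset.card = n := by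
      rw [Multiset.toFinsupp_toMultiset]; exact s.2
    rw [hs, hcard] at h2
    exact h2

end

/-- The Newton-type identity `n · h_n = ∑_{i=1}^{n} p_i · h_{n-i}`, equivalent to the two
expressions for the plethystic exponential `∑_{n≥0} h_n t^n = exp(∑_{n≥1} p_n t^n / n)`. -/
theorem hsymm_newton_identity (R : Type*) [CommRing R] (σ : Type*) [Fintype σ]
    [DecidableEq σ] (n : ℕ) (hn : 1 ≤ n) :
    (n : MvPolynomial σ R) * hsymm σ R n =
      ∑ i ∈ Finset.Icc 1 n, psum σ R i * hsymm σ R (n - i) := by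
  apply MvPolynomial.ext
  intro μ
  rw [← nsmul_eq_mul, coeff_smul, MvPolynomial.coeff_sum]
  have hjS : ∀ j : σ, μ j ≤ ∑ x, μ x := fun j =>
    Finset.single_le_sum (fun x _ => Nat.zero_le _) (Finset.mem_univ j)
  have hterm : ∀ i ∈ Finset.Icc 1 n, coeff μ (psum σ R i * hsymm σ R (n - i)) =
      ∑ j : σ, (if i ≤ μ j ∧ (∑ x, μ x) = n then (1 : R) else 0) := by
    intro i hi
    rw [Finset.mem_Icc] at hi
    rw [psum, Finset.sum_mul, MvPolynomial.coeff_sum]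
    apply Finset.sum_congr rfl
    intro j _
    rw [X_pow_eq_monomial, coeff_monomial_mul', coeff_hsymm']
    by_cases h1 : i ≤ μ j
    · have hle : Finsupp.single j i ≤ μ := Finsupp.single_le_iff.2 h1
      rw [if_pos hle, one_mul]
      have h3 : (∑ x, Finsupp.single j i x) = i := by
        simp [Finsupp.single_apply]
      have h4 : (∑ x, (μ - Finsupp.single j i) x) = (∑ x, μ x) - i := by
        calc (∑ x, (μ - Finsupp.single j i) x)
            = ∑ x, (μ x - Finsupp.single j i x) := by
              apply Finset.sum_congr rfl
              intro x _
              rw [Finsupp.tsub_apply]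
          _ = (∑ x, μ x) - ∑ x, Finsupp.single j i x :=
              Finset.sum_tsub_distrib _ (fun x _ => Finsupp.le_def.mp hle x)
          _ = (∑ x, μ x) - i := by rw [h3]
      have h6 : i ≤ ∑ x, μ x := le_trans h1 (hjS j)
      by_cases h5 : (∑ x, μ x) = n
      · rw [if_pos (show (∑ x, (μ - Finsupp.single j i) x) = n - i by omega), if_pos ⟨h1, h5⟩]
      · rw [if_neg (by omega), if_neg (by tauto)]
    · rw [if_neg (fun hle => h1 (Finsupp.single_le_iff.1 hle)),
        if_neg (by tauto)]
  rw [Finset.sum_congr rfl hterm, Finset.sum_comm, coeff_hsymm']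
  by_cases h : (∑ x, μ x) = n
  · rw [if_pos h]
    have hcol : ∀ j : σ, (∑ i ∈ Finset.Icc 1 n,
        if i ≤ μ j ∧ (∑ x, μ x) = n then (1 : R) else 0) = (μ j : R) := by
      intro j
      have hj : μ j ≤ n := h ▸ hjS j
      simp only [h, and_true]
      rw [Finset.sum_boole]
      have : Finset.filter (fun i => i ≤ μ j) (Finset.Icc 1 n) = Finset.Icc 1 (μ j) := by
        ext i
        simp only [Finset.mem_filter, Finset.mem_Icc]
        omega
      rw [this, Nat.card_Icc]
      simp
    rw [Finset.sum_congr rfl (fun j _ => hcol j)]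
    rw [← Nat.cast_sum, h]
    simp [nsmul_eq_mul]
  · rw [if_neg h, smul_zero]
    symm
    apply Finset.sum_eq_zero
    intro j _
    apply Finset.sum_eq_zero
    intro i _
    rw [if_neg (by tauto)]
end
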